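/- Let x = (x_n) be a nonzero element of ⊕_1 X_n. Then D(x) = sup_n D(x_n) if x_n ≠ 0 for every n, and D(x) = 2 if x_n = 0 for some n. -/

import Mathlib

/-!
A functional on `⊕_1 X_n` is the same thing as a bounded family of coordinate functionals
`f_n = f ∘ single n`, with `‖f‖ = sup_n ‖f_n‖`. If `f` supports `x`, then since
`∑ f_n (x_n) = ‖x‖ = ∑ ‖x_n‖` with `f_n (x_n) ≤ ‖x_n‖`, every `f_n` supports `x_n`;
conversely any family of functionals of norm `≤ 1` supporting the `x_n` assembles to a support
functional of `x`.
Hence `J(x)` is the product of the sets `J(x_n)` inside `⊕_∞ X_n*`, whose diameter in the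
sup-norm is `sup_n D(x_n)`. When `x_n = 0`, the factor `J(x_n)` is the whole unit sphere of
`X_n*`, of diameter 2.
-/

open Metric
open scoped ENNReal

section SupportFunctionals

variable {F : Type*} [NormedAddCommGroup F] [NormedSpace ℝ F]

def supportFunctionals (x : F) : Set (F →L[ℝ] ℝ) := {f | ‖f‖ = 1 ∧ f x = ‖x‖}

lemma supportFunctionals_subset_closedBall (x : F) :
    supportFunctionals x ⊆ closedBall 0 1 := fun f hf => by
  simpa using hf.1.le

lemma isBounded_supportFunctionals (x : F) : Bornology.IsBounded (supportFunctionals x) :=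
  isBounded_closedBall.subset (supportFunctionals_subset_closedBall x)

lemma diam_supportFunctionals_le_two (x : F) : diam (supportFunctionals x) ≤ 2 :=
  (diam_mono (supportFunctionals_subset_closedBall x) isBounded_closedBall).trans
    ((diam_closedBall zero_le_one).trans_eq (mul_one 2))

lemma mem_supportFunctionals_of_norm_le_one {x : F} (hx : x ≠ 0) {f : F →L[ℝ] ℝ}
    (hf : ‖f‖ ≤ 1) (hfx : f x = ‖x‖) : f ∈ supportFunctionals x := by
  refine ⟨le_antisymm hf <| (le_mul_iff_one_le_left (norm_pos_iff.2 hx)).1 ?_, hfx⟩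
  calc ‖x‖ = f x := hfx.symm
    _ ≤ ‖f x‖ := le_abs_self _
    _ ≤ ‖f‖ * ‖x‖ := f.le_opNorm x

lemma diam_supportFunctionals_zero [Nontrivial F] : diam (supportFunctionals (0 : F)) = 2 := by
  refine le_antisymm (diam_supportFunctionals_le_two 0) ?_
  obtain ⟨u, hu, -⟩ := exists_dual_vector' ℝ (0 : F)
  have hu_mem : u ∈ supportFunctionals (0 : F) := ⟨hu, by simp⟩
  have hnegu_mem : -u ∈ supportFunctionals (0 : F) := ⟨by rw [norm_neg, hu], by simp⟩
  calc (2 : ℝ) = ‖u - -u‖ := by rw [sub_neg_eq_add, ← two_smul ℝ, norm_smul, hu]; norm_num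
    _ = dist u (-u) := (dist_eq_norm _ _).symm
    _ ≤ diam (supportFunctionals (0 : F)) :=
      dist_le_diam_of_mem (isBounded_supportFunctionals 0) hu_mem hnegu_mem

end SupportFunctionals

namespace lp

variable {ι : Type*} {E : ι → Type*} [∀ i, NormedAddCommGroup (E i)]

lemma hasSum_norm_one (y : lp E 1) : HasSum (fun i => ‖y i‖) ‖y‖ := by
  simpa using lp.hasSum_norm (by norm_num : (0 : ℝ) < (1 : ℝ≥0∞).toReal) y

variable [∀ i, NormedSpace ℝ (E i)]

lemma summable_apply_of_norm_le_one {g : ∀ i, E i →L[ℝ] ℝ} (hg : ∀ i, ‖g i‖ ≤ 1) (y : lp E 1) :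
    Summable fun i => g i (y i) :=
  .of_norm_bounded (hasSum_norm_one y).summable fun i =>
    ((g i).le_of_opNorm_le (hg i) (y i)).trans_eq (one_mul _)

noncomputable def functionalOfNormLeOne (g : ∀ i, E i →L[ℝ] ℝ) (hg : ∀ i, ‖g i‖ ≤ 1) :
    lp E 1 →L[ℝ] ℝ :=
  LinearMap.mkContinuous
    { toFun := fun y => ∑' i, g i (y i)
      map_add' := fun y z => by
        simp only [lp.coeFn_add, Pi.add_apply, map_add]
        exact (summable_apply_of_norm_le_one hg y).tsum_add (summable_apply_of_norm_le_one hg z)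
      map_smul' := fun c y => by
        simp only [lp.coeFn_smul, Pi.smul_apply, map_smul, smul_eq_mul, RingHom.id_apply]
        exact tsum_mul_left }
    1 fun y => by
      rw [one_mul]
      exact tsum_of_norm_bounded (hasSum_norm_one y) fun i =>
        ((g i).le_of_opNorm_le (hg i) (y i)).trans_eq (one_mul _)

lemma functionalOfNormLeOne_apply {g : ∀ i, E i →L[ℝ] ℝ} (hg : ∀ i, ‖g i‖ ≤ 1) (y : lp E 1) :
    functionalOfNormLeOne g hg y = ∑' i, g i (y i) := rfl

lemma norm_functionalOfNormLeOne_le {g : ∀ i, E i →L[ℝ] ℝ} (hg : ∀ i, ‖g i‖ ≤ 1) :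
    ‖functionalOfNormLeOne g hg‖ ≤ 1 :=
  LinearMap.mkContinuous_norm_le _ zero_le_one _

variable [DecidableEq ι]

lemma functionalOfNormLeOne_comp_single {g : ∀ i, E i →L[ℝ] ℝ} (hg : ∀ i, ‖g i‖ ≤ 1) (i : ι) :
    (functionalOfNormLeOne g hg).comp (singleContinuousLinearMap ℝ E 1 i) = g i := by
  ext a
  rw [ContinuousLinearMap.comp_apply, singleContinuousLinearMap_apply,
    functionalOfNormLeOne_apply,
    tsum_eq_single i fun j hj => by rw [lp.single_apply_ne 1 i a hj, map_zero],
    lp.single_apply_self]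

lemma opNorm_le_of_forall_norm_comp_single_le {G : Type*} [NormedAddCommGroup G]
    [NormedSpace ℝ G] (f : lp E 1 →L[ℝ] G) {M : ℝ} (hM : 0 ≤ M)
    (h : ∀ i, ‖f.comp (singleContinuousLinearMap ℝ E 1 i)‖ ≤ M) : ‖f‖ ≤ M := by
  refine f.opNorm_le_bound hM fun y => ?_
  have hf : HasSum (fun i => f (lp.single 1 i (y i))) (f y) :=
    (lp.hasSum_single ENNReal.one_ne_top y).mapL f
  refine hf.norm_le_of_bounded ((hasSum_norm_one y).mul_left M) fun i => ?_
  simpa using ((f.comp (singleContinuousLinearMap ℝ E 1 i)).le_opNorm (y i)).trans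
    (mul_le_mul_of_nonneg_right (h i) (norm_nonneg _))

lemma norm_comp_single_le {p : ℝ≥0∞} [Fact (1 ≤ p)] {G : Type*} [NormedAddCommGroup G]
    [NormedSpace ℝ G] (f : lp E p →L[ℝ] G) (i : ι) :
    ‖f.comp (singleContinuousLinearMap ℝ E p i)‖ ≤ ‖f‖ :=
  (f.comp _).opNorm_le_bound (norm_nonneg f) fun a => by
    simpa [lp.norm_single (zero_lt_one.trans_le Fact.out)] using f.le_opNorm (lp.single p i a)

lemma comp_single_apply_eq_norm {x : lp E 1} {f : lp E 1 →L[ℝ] ℝ}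
    (hf : f ∈ supportFunctionals x) (i : ι) :
    f.comp (singleContinuousLinearMap ℝ E 1 i) (x i) = ‖x i‖ := by
  set φ := fun i => f.comp (singleContinuousLinearMap ℝ E 1 i)
  have hle : ∀ j, φ j (x j) ≤ ‖x j‖ := fun j =>
    (le_abs_self _).trans <| ((φ j).le_of_opNorm_le (hf.1 ▸ norm_comp_single_le f j) _).trans_eq
      (one_mul _)
  -- `∑ (‖x j‖ - φ j (x j)) = ‖x‖ - f x = 0` is a null sum of nonnegative terms
  have hsum : HasSum (fun j => ‖x j‖ - φ j (x j)) 0 := by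
    simpa [φ, hf.2] using (hasSum_norm_one x).sub ((lp.hasSum_single ENNReal.one_ne_top x).mapL f)
  have hi := congr_fun ((hasSum_zero_iff_of_nonneg fun j => sub_nonneg.2 (hle j)).1 hsum) i
  rw [Pi.zero_apply, sub_eq_zero] at hi
  exact hi.symm

lemma comp_single_mem_supportFunctionals {x : lp E 1} {f : lp E 1 →L[ℝ] ℝ}
    (hf : f ∈ supportFunctionals x) {i : ι} (hxi : x i ≠ 0) :
    f.comp (singleContinuousLinearMap ℝ E 1 i) ∈ supportFunctionals (x i) :=
  mem_supportFunctionals_of_norm_le_one hxi (hf.1 ▸ norm_comp_single_le f i)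
    (comp_single_apply_eq_norm hf i)

lemma exists_mem_supportFunctionals_comp_single_eq {x : lp E 1} (hx : x ≠ 0) (i : ι)
    {g : E i →L[ℝ] ℝ} (hg : ‖g‖ ≤ 1) (hgx : g (x i) = ‖x i‖) :
    ∃ f ∈ supportFunctionals x, f.comp (singleContinuousLinearMap ℝ E 1 i) = g := by
  choose ψ hψ_norm hψ_apply using fun j => exists_dual_vector'' ℝ (x j)
  have hg_norm : ∀ j, ‖Function.update ψ i g j‖ ≤ 1 :=
    (Function.forall_update_iff ψ fun j (φ : E j →L[ℝ] ℝ) => ‖φ‖ ≤ 1).2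
      ⟨hg, fun j _ => hψ_norm j⟩
  have hg_apply : ∀ j, Function.update ψ i g j (x j) = ‖x j‖ :=
    (Function.forall_update_iff ψ fun j (φ : E j →L[ℝ] ℝ) => φ (x j) = ‖x j‖).2
      ⟨hgx, fun j _ => hψ_apply j⟩
  refine ⟨functionalOfNormLeOne _ hg_norm,
    mem_supportFunctionals_of_norm_le_one hx (norm_functionalOfNormLeOne_le hg_norm) ?_, ?_⟩
  · rw [functionalOfNormLeOne_apply, funext hg_apply]
    exact (hasSum_norm_one x).tsum_eq
  · rw [functionalOfNormLeOne_comp_single, Function.update_self]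

lemma diam_supportFunctionals_apply_le {x : lp E 1} (hx : x ≠ 0) (i : ι) :
    diam (supportFunctionals (x i)) ≤ diam (supportFunctionals x) := by
  refine diam_le_of_forall_dist_le diam_nonneg fun g₁ hg₁ g₂ hg₂ => ?_
  obtain ⟨f₁, hf₁, rfl⟩ := exists_mem_supportFunctionals_comp_single_eq hx i hg₁.1.le hg₁.2
  obtain ⟨f₂, hf₂, rfl⟩ := exists_mem_supportFunctionals_comp_single_eq hx i hg₂.1.le hg₂.2
  calc dist (f₁.comp _) (f₂.comp _) = ‖(f₁ - f₂).comp (singleContinuousLinearMap ℝ E 1 i)‖ := by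
        rw [dist_eq_norm, ContinuousLinearMap.sub_comp]
    _ ≤ dist f₁ f₂ := (norm_comp_single_le _ i).trans_eq (dist_eq_norm _ _).symm
    _ ≤ diam (supportFunctionals x) := dist_le_diam_of_mem (isBounded_supportFunctionals x) hf₁ hf₂

lemma diam_supportFunctionals_le_iSup {x : lp E 1} (hx : ∀ i, x i ≠ 0) :
    diam (supportFunctionals x) ≤ ⨆ i, diam (supportFunctionals (x i)) := by
  have hbdd : BddAbove (Set.range fun i => diam (supportFunctionals (x i))) :=
    ⟨2, Set.forall_mem_range.2 fun i => diam_supportFunctionals_le_two (x i)⟩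
  have hnonneg : 0 ≤ ⨆ i, diam (supportFunctionals (x i)) := Real.iSup_nonneg fun _ => diam_nonneg
  refine diam_le_of_forall_dist_le hnonneg fun f₁ hf₁ f₂ hf₂ => ?_
  rw [dist_eq_norm]
  refine opNorm_le_of_forall_norm_comp_single_le _ hnonneg fun i => ?_
  calc ‖(f₁ - f₂).comp (singleContinuousLinearMap ℝ E 1 i)‖
      = dist (f₁.comp (singleContinuousLinearMap ℝ E 1 i))
          (f₂.comp (singleContinuousLinearMap ℝ E 1 i)) := by
        rw [dist_eq_norm, ContinuousLinearMap.sub_comp]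
    _ ≤ diam (supportFunctionals (x i)) :=
        dist_le_diam_of_mem (isBounded_supportFunctionals (x i))
          (comp_single_mem_supportFunctionals hf₁ (hx i))
          (comp_single_mem_supportFunctionals hf₂ (hx i))
    _ ≤ ⨆ i, diam (supportFunctionals (x i)) := le_ciSup hbdd i

end lp

/-- For a nonzero `x = (x_n)` in ⊕_1 E_n: if all coordinates are nonzero then the diameter
of the set of support functionals of `x` equals `sup_n D(x_n)`, and if some coordinate
vanishes then it equals 2. -/
theorem stmt13 (E : ℕ → Type*) [∀ n, NormedAddCommGroup (E n)]
    [∀ n, NormedSpace ℝ (E n)] [∀ n, Nontrivial (E n)]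
    (x : lp E 1) (hx : x ≠ 0) :
    ((∀ n, x n ≠ 0) →
      Metric.diam {f : (lp E 1) →L[ℝ] ℝ | ‖f‖ = 1 ∧ f x = ‖x‖} =
        ⨆ n, Metric.diam {g : E n →L[ℝ] ℝ | ‖g‖ = 1 ∧ g (x n) = ‖x n‖}) ∧
    ((∃ n, x n = 0) →
      Metric.diam {f : (lp E 1) →L[ℝ] ℝ | ‖f‖ = 1 ∧ f x = ‖x‖} = 2) := by
  refine ⟨fun hx_coord => ?_, fun ⟨n, hxn⟩ => ?_⟩
  · exact le_antisymm (lp.diam_supportFunctionals_le_iSup hx_coord)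
      (ciSup_le fun n => lp.diam_supportFunctionals_apply_le hx n)
  · refine le_antisymm (diam_supportFunctionals_le_two x) ?_
    have := lp.diam_supportFunctionals_apply_le hx n
    rwa [hxn, diam_supportFunctionals_zero] at this
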